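/- arXiv:1303.4449 — 3 statements merged into one kernel-verified Lean document; each statement's English description precedes it below -/
import Mathlib

section
/- The girth of the Petersen graph is 5. -/
/-!
The Kneser graph `K(5,2)` has no triangle, since three pairwise disjoint pairs would need six
points; and two distinct pairs `a ≠ c` cover at least three points, so their only possible common
neighbour is the complement of `a ∪ c`, which rules out 4-cycles. The pentagon
`{0,1}, {2,3}, {4,0}, {1,2}, {3,4}` is a 5-cycle.
-/

/-- The Petersen graph, as the Kneser graph `K(5,2)`: vertices are `2`-element
subsets of `Fin 5`, adjacent iff disjoint. -/
def petersenGraph : SimpleGraph {s : Finset (Fin 5) // s.card = 2} where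
  Adj s t := Disjoint s.1 t.1
  symm := ⟨fun _ _ h => h.symm⟩
  loopless := ⟨fun s h => by
    have h2 := s.2
    simp only [disjoint_self, Finset.bot_eq_empty] at h
    simp [h] at h2⟩

namespace SimpleGraph

variable {V : Type*} {G : SimpleGraph V}

lemma Walk.IsCycle.length_ne_three (hG : G.CliqueFree 3) {u : V} {w : G.Walk u u}
    (hw : w.IsCycle) : w.length ≠ 3 := fun h3 => by
  obtain ⟨s, hs⟩ := is3Clique_iff_exists_cycle_length_three.mpr ⟨u, w, hw, h3⟩
  exact hG s hs

lemma Walk.IsCycle.length_ne_four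
    (hG : ∀ a b c d : V, a ≠ c → G.Adj a b → G.Adj b c → G.Adj c d → G.Adj d a → b = d)
    {u : V} {w : G.Walk u u} (hw : w.IsCycle) : w.length ≠ 4 := by
  intro h4
  match w, hw, h4 with
  | .cons hab (.cons hbc (.cons hcd (.cons hda .nil))), hw, _ =>
    have hsupp := hw.support_nodup
    simp only [Walk.support_cons, Walk.support_nil, List.tail_cons, List.nodup_cons,
      List.mem_cons, List.not_mem_nil, not_or] at hsupp
    obtain ⟨⟨-, hbd, -⟩, ⟨-, hcu, -⟩, -⟩ := hsupp
    exact hbd (hG _ _ _ _ (Ne.symm hcu) hab hbc hcd hda)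

lemma five_le_egirth (h3 : G.CliqueFree 3)
    (h4 : ∀ a b c d : V, a ≠ c → G.Adj a b → G.Adj b c → G.Adj c d → G.Adj d a → b = d) :
    5 ≤ G.egirth :=
  le_egirth.mpr fun _ _ hw => by
    have := hw.three_le_length
    have := hw.length_ne_three h3
    have := hw.length_ne_four h4
    norm_cast
    omega

lemma girth_eq_length_of_le_egirth {u : V} {w : G.Walk u u} (hw : w.IsCycle)
    (h : (w.length : ℕ∞) ≤ G.egirth) : G.girth = w.length := by
  rw [girth, le_antisymm (egirth_le_length hw) h, ENat.toNat_natCast]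

end SimpleGraph

namespace Finset
variable {α : Type*} [DecidableEq α]

lemma card_lt_card_union_of_ne {s t : Finset α} (hst : s ≠ t) (hcard : #s = #t) :
    #s < #(s ∪ t) := by
  refine card_lt_card (left_lt_sup.mpr fun hts => hst ?_)
  exact (eq_of_subset_of_card_le hts hcard.le).symm

end Finset

open Finset SimpleGraph

instance : DecidableRel petersenGraph.Adj :=
  fun s t => inferInstanceAs (Decidable (Disjoint s.1 t.1))

lemma petersenGraph_cliqueFree_three : petersenGraph.CliqueFree 3 := by
  intro s hs
  obtain ⟨a, b, c, hab, hac, hbc, -⟩ := is3Clique_iff.mp hs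
  have hcard : #(a.1 ∪ b.1 ∪ c.1) = 6 := by
    rw [card_union_of_disjoint (disjoint_union_left.mpr ⟨hac, hbc⟩),
      card_union_of_disjoint hab, a.2, b.2, c.2]
  have := card_le_univ (a.1 ∪ b.1 ∪ c.1)
  rw [hcard, Fintype.card_fin] at this
  omega

lemma petersenGraph_eq_of_adj_of_adj {a b c d : {s : Finset (Fin 5) // s.card = 2}} (hac : a ≠ c)
    (hab : petersenGraph.Adj a b) (hbc : petersenGraph.Adj b c)
    (hcd : petersenGraph.Adj c d) (hda : petersenGraph.Adj d a) : b = d := by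
  have hunion : 2 < #(a.1 ∪ c.1) := by
    simpa [a.2] using card_lt_card_union_of_ne (Subtype.val_injective.ne hac) (a.2.trans c.2.symm)
  have hcompl : #(a.1 ∪ c.1)ᶜ ≤ 2 := by
    rw [card_compl, Fintype.card_fin]
    omega
  have hcommon {x : {s : Finset (Fin 5) // s.card = 2}} (hxa : Disjoint x.1 a.1)
      (hxc : Disjoint x.1 c.1) : x.1 = (a.1 ∪ c.1)ᶜ :=
    eq_of_subset_of_card_le
      (subset_compl_iff_disjoint_right.mpr (disjoint_union_right.mpr ⟨hxa, hxc⟩)) (by rwa [x.2])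
  exact Subtype.ext ((hcommon hab.symm hbc).trans (hcommon hda hcd.symm).symm)

def petersenPentagon : petersenGraph.Walk ⟨{0, 1}, rfl⟩ ⟨{0, 1}, rfl⟩ :=
  .cons (v := ⟨{2, 3}, rfl⟩) (by decide) <|
  .cons (v := ⟨{4, 0}, rfl⟩) (by decide) <|
  .cons (v := ⟨{1, 2}, rfl⟩) (by decide) <|
  .cons (v := ⟨{3, 4}, rfl⟩) (by decide) <|
  .cons (by decide) .nil

lemma petersenPentagon_isCycle : petersenPentagon.IsCycle := by
  rw [Walk.isCycle_def, Walk.isTrail_def]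
  exact ⟨by decide, nofun, by decide⟩

theorem girth_petersen : petersenGraph.girth = 5 :=
  girth_eq_length_of_le_egirth petersenPentagon_isCycle
    (five_le_egirth petersenGraph_cliqueFree_three fun _ _ _ _ =>
      petersenGraph_eq_of_adj_of_adj)
end

section
/- The gonality of the finite graph K_{3,3} is 3: there exists a divisor of degree 3 with Baker–Norine rank at least 1, and no divisor of degree 2 on K_{3,3} has rank at least 1. -/
open Finset in
/-- The degree of a divisor (an integer-valued function on vertices). -/
def divDeg {V : Type*} [Fintype V] (D : V → ℤ) : ℤ := ∑ v, D v

open scoped Classical in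
/-- The graph Laplacian applied to an integer-valued function on vertices. -/
noncomputable def graphLaplacian {V : Type*} [Fintype V] (G : SimpleGraph V)
    (f : V → ℤ) : V → ℤ :=
  fun v => ∑ w, if G.Adj v w then f v - f w else 0

/-- Two divisors are linearly equivalent if they differ by a Laplacian. -/
def LinEquiv {V : Type*} [Fintype V] (G : SimpleGraph V) (D D' : V → ℤ) : Prop :=
  ∃ f : V → ℤ, D' = D + graphLaplacian G f

/-- A divisor is effective if it is nonnegative at every vertex. -/
def Effective {V : Type*} (D : V → ℤ) : Prop := ∀ v, 0 ≤ D v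

/-- A divisor is winnable if it is linearly equivalent to an effective divisor. -/
def Winnable {V : Type*} [Fintype V] (G : SimpleGraph V) (D : V → ℤ) : Prop :=
  ∃ D', LinEquiv G D D' ∧ Effective D'

/-- The Baker–Norine rank of `D` is at least `r` if `D - E` is winnable for every
effective divisor `E` of degree `r`. -/
def RankGe {V : Type*} [Fintype V] (G : SimpleGraph V) (D : V → ℤ) (r : ℕ) : Prop :=
  ∀ E : V → ℤ, Effective E → divDeg E = r → Winnable G (D - E)

/-! ### Auxiliary material for `gonality_K33` -/

abbrev Vtt := Fin 3 ⊕ Fin 3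
abbrev Gtt := completeBipartiteGraph (Fin 3) (Fin 3)

/-- one chip at `v` -/
def δtt (v : Vtt) : Vtt → ℤ := fun w => if w = v then 1 else 0

lemma lap_inl (f : Vtt → ℤ) (i : Fin 3) :
    graphLaplacian Gtt f (Sum.inl i)
      = 3 * f (Sum.inl i) - (f (Sum.inr 0) + f (Sum.inr 1) + f (Sum.inr 2)) := by
  unfold graphLaplacian
  rw [Fintype.sum_sum_type]
  simp [Fin.sum_univ_three]

lemma lap_inr (f : Vtt → ℤ) (i : Fin 3) :
    graphLaplacian Gtt f (Sum.inr i)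
      = 3 * f (Sum.inr i) - (f (Sum.inl 0) + f (Sum.inl 1) + f (Sum.inl 2)) := by
  unfold graphLaplacian
  rw [Fintype.sum_sum_type]
  simp [Fin.sum_univ_three]

lemma divDeg_lap (f : Vtt → ℤ) : divDeg (graphLaplacian Gtt f) = 0 := by
  unfold divDeg
  rw [Fintype.sum_sum_type]
  simp only [Fin.sum_univ_three, lap_inl, lap_inr]
  ring

lemma divDeg_delta (v : Vtt) : divDeg (δtt v) = 1 := by
  unfold divDeg δtt
  simp

lemma divDeg_add (X Y : Vtt → ℤ) : divDeg (X + Y) = divDeg X + divDeg Y := by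
  unfold divDeg
  simp [Finset.sum_add_distrib]

lemma divDeg_sub (X Y : Vtt → ℤ) : divDeg (X - Y) = divDeg X - divDeg Y := by
  unfold divDeg
  simp [Finset.sum_sub_distrib]

lemma delta_effective (v : Vtt) : Effective (δtt v) := by
  intro w
  unfold δtt
  split <;> norm_num

lemma single_chip (E : Vtt → ℤ) (hE : Effective E) (hd : divDeg E = 1) :
    ∃ v, E = δtt v := by
  classical
  have hne : ∃ v, E v ≠ 0 := by
    by_contra h
    push_neg at h
    simp only [divDeg] at hd
    rw [Finset.sum_congr rfl (fun v _ => h v)] at hd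
    simp at hd
  obtain ⟨v, hv⟩ := hne
  have hv1 : 1 ≤ E v := lt_of_le_of_ne (hE v) (Ne.symm hv)
  have hsplit : E v + ∑ w ∈ Finset.univ.erase v, E w = 1 := by
    rw [Finset.add_sum_erase _ _ (Finset.mem_univ v)] at *
    exact hd
  have hrest0 : ∑ w ∈ Finset.univ.erase v, E w = 0 := by
    have hnn : 0 ≤ ∑ w ∈ Finset.univ.erase v, E w :=
      Finset.sum_nonneg fun w _ => hE w
    omega
  have hall : ∀ w ∈ Finset.univ.erase v, E w = 0 := by
    intro w hw
    have := (Finset.sum_eq_zero_iff_of_nonneg (fun w _ => hE w)).mp hrest0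
    exact this w hw
  refine ⟨v, funext fun w => ?_⟩
  unfold δtt
  by_cases h : w = v
  · subst h; simp; omega
  · simp [h]; exact hall w (Finset.mem_erase.mpr ⟨h, Finset.mem_univ w⟩)

/-- The mod-3 invariant of a divisor class on `K_{3,3}`. -/
def psiTT (D : Vtt → ℤ) : ZMod 3 × ZMod 3 × ZMod 3 × ZMod 3 :=
  (((D (Sum.inl 0) - D (Sum.inl 1) : ℤ) : ZMod 3),
   ((D (Sum.inl 0) - D (Sum.inl 2) : ℤ) : ZMod 3),
   ((D (Sum.inr 0) - D (Sum.inr 1) : ℤ) : ZMod 3),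
   ((D (Sum.inr 0) - D (Sum.inr 2) : ℤ) : ZMod 3))

lemma cast3 (x y z w : ℤ) (h : z = x - y + 3 * w) :
    (x : ZMod 3) = (y : ZMod 3) + (z : ZMod 3) := by
  subst h
  push_cast
  ring_nf
  rw [show (3 : ZMod 3) = 0 by decide]
  ring

lemma no_good :
    ¬ ∃ p : ZMod 3 × ZMod 3 × ZMod 3 × ZMod 3,
        ∀ e : Vtt, ∃ v : Vtt, p = psiTT (δtt e) + psiTT (δtt v) := by decide

theorem gonality_K33 :
    (∃ D : Fin 3 ⊕ Fin 3 → ℤ, divDeg D = 3 ∧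
        RankGe (completeBipartiteGraph (Fin 3) (Fin 3)) D 1) ∧
      ∀ D : Fin 3 ⊕ Fin 3 → ℤ, divDeg D = 2 →
        ¬ RankGe (completeBipartiteGraph (Fin 3) (Fin 3)) D 1 := by
  constructor
  · -- the divisor with one chip on each right-hand vertex has rank ≥ 1
    refine ⟨Sum.elim (fun _ => 0) (fun _ => 1), ?_, ?_⟩
    · unfold divDeg
      rw [Fintype.sum_sum_type]
      simp
    · intro E hE hdE
      obtain ⟨v0, rfl⟩ := single_chip E hE (by exact_mod_cast hdE)
      rcases v0 with j | j
      · -- remove a chip at a left vertex: fire that vertex's complement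
        refine ⟨_, ⟨δtt (Sum.inl j), rfl⟩, ?_⟩
        intro w
        rcases w with i | i
        · rw [Pi.add_apply, Pi.sub_apply, lap_inl]
          fin_cases i <;> fin_cases j <;> simp [δtt]
        · rw [Pi.add_apply, Pi.sub_apply, lap_inr]
          fin_cases i <;> fin_cases j <;> simp [δtt]
      · -- remove a chip at a right vertex: already effective
        refine ⟨_, ⟨0, rfl⟩, ?_⟩
        intro w
        rcases w with i | i
        · rw [Pi.add_apply, Pi.sub_apply, lap_inl]
          fin_cases i <;> fin_cases j <;> simp [δtt]
        · rw [Pi.add_apply, Pi.sub_apply, lap_inr]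
          fin_cases i <;> fin_cases j <;> simp [δtt]
  · -- no divisor of degree 2 has rank ≥ 1
    intro D hD hR
    have key : ∀ e : Vtt, ∃ v : Vtt, psiTT D = psiTT (δtt e) + psiTT (δtt v) := by
      intro e
      obtain ⟨D', ⟨f, hf⟩, heff⟩ :=
        hR (δtt e) (delta_effective e) (by exact_mod_cast divDeg_delta e)
      have hdeg' : divDeg D' = 1 := by
        rw [hf, divDeg_add, divDeg_sub, divDeg_lap, divDeg_delta, hD]
        ring
      obtain ⟨v, hv⟩ := single_chip D' heff hdeg'
      refine ⟨v, ?_⟩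
      have hEq : ∀ w, D w - δtt e w + graphLaplacian Gtt f w = δtt v w := by
        intro w
        have := congrFun (hf.symm.trans hv) w
        simpa using this
      have h1 := hEq (Sum.inl 0); have h2 := hEq (Sum.inl 1); have h3 := hEq (Sum.inl 2)
      have h4 := hEq (Sum.inr 0); have h5 := hEq (Sum.inr 1); have h6 := hEq (Sum.inr 2)
      rw [lap_inl] at h1 h2 h3
      rw [lap_inr] at h4 h5 h6
      simp only [psiTT, Prod.mk_add_mk, Prod.mk.injEq]
      exact ⟨cast3 _ _ _ (f (Sum.inl 0) - f (Sum.inl 1)) (by omega),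
             cast3 _ _ _ (f (Sum.inl 0) - f (Sum.inl 2)) (by omega),
             cast3 _ _ _ (f (Sum.inr 0) - f (Sum.inr 1)) (by omega),
             cast3 _ _ _ (f (Sum.inr 0) - f (Sum.inr 2)) (by omega)⟩
    exact no_good ⟨psiTT D, key⟩
end

section
/- For the genus-4 'wheel-type' planar graph Γ_1 (three inner rim vertices forming a triangle, three outer rim vertices forming a triangle, joined by three spokes matching inner to outer vertices), the divisor consisting of the three inner rim vertices has Baker–Norine rank at least 1. -/
/-- The genus-4 planar "wheel-type" graph: inner triangle on vertices `0,1,2`,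
outer triangle on vertices `3,4,5`, and spokes `0-3`, `1-4`, `2-5`. -/
def wheelGraph : SimpleGraph (Fin 6) :=
  SimpleGraph.fromRel (fun v w =>
    (v, w) ∈ [((0 : Fin 6), (1 : Fin 6)), (0, 2), (1, 2), (3, 4), (3, 5), (4, 5),
      (0, 3), (1, 4), (2, 5)])

/-- The divisor consisting of the three inner rim vertices of the wheel graph. -/
def innerRimDiv : Fin 6 → ℤ := fun v => if v = 0 ∨ v = 1 ∨ v = 2 then 1 else 0

lemma lap_zero : graphLaplacian wheelGraph (fun _ => 0) = fun _ => 0 := by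
  funext v
  simp [graphLaplacian]

lemma lap_outer : graphLaplacian wheelGraph
    (fun v => if v = 0 ∨ v = 1 ∨ v = 2 then 0 else 1) =
    fun v => if v = 0 ∨ v = 1 ∨ v = 2 then -1 else 1 := by
  funext v
  fin_cases v <;>
    simp [graphLaplacian, wheelGraph, SimpleGraph.fromRel_adj, Fin.sum_univ_six]

theorem rank_ge_one_inner_rim : RankGe wheelGraph innerRimDiv 1 := by
  intro E hE hdeg
  have h0 := hE 0
  have h1 := hE 1
  have h2 := hE 2
  have h3 := hE 3
  have h4 := hE 4
  have h5 := hE 5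
  have hsum : E 0 + E 1 + E 2 + E 3 + E 4 + E 5 = 1 := by
    simpa [divDeg, Fin.sum_univ_six] using hdeg
  by_cases hout : E 3 = 0 ∧ E 4 = 0 ∧ E 5 = 0
  · refine ⟨innerRimDiv - E, ⟨fun _ => 0, by rw [lap_zero]; funext v; simp⟩, ?_⟩
    intro v
    fin_cases v <;> simp [innerRimDiv] <;> omega
  · refine ⟨innerRimDiv - E + graphLaplacian wheelGraph
      (fun v => if v = 0 ∨ v = 1 ∨ v = 2 then 0 else 1),
      ⟨_, rfl⟩, ?_⟩
    intro v
    rw [lap_outer]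
    fin_cases v <;> simp [innerRimDiv] <;> omega
end
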